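/- arXiv:1612.05201 — 2 statements merged into one kernel-verified Lean document; each statement's English description precedes it below -/
import Mathlib

section
/- Let L be an n×n Laplacian matrix with eigenprojection L^⊢, and let δ > 0. Taking v = δ·1 (so s = δn), the eigenprojection of L₀ + H_{δ,δ1} equals 1′·(1/(n+1))·[1ᵀ(I + δ⁻¹L)⁻¹ 1] (the outer product of the all-ones column vector 1′ of length n+1 with the row vector whose first n entries are (1/(n+1))·1ᵀ(I + δ⁻¹L)⁻¹ and whose last entry is 1/(n+1)); moreover, as δ → 0⁺ this eigenprojection converges to 1′·(1/(n+1))·[1ᵀL^⊢ 1]. -/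
open Matrix Filter Topology

/-- The index of a square real matrix: the smallest `k` with
`rank (A^(k+1)) = rank (A^k)`. -/
noncomputable def matIndex {m : Type*} [Fintype m] [DecidableEq m]
    (A : Matrix m m ℝ) : ℕ :=
  sInf {k : ℕ | (A ^ (k + 1)).rank = (A ^ k).rank}

/-- `Q` is the eigenprojection of `A` corresponding to the eigenvalue `0`:
an idempotent matrix whose range is the null space of `A ^ ind A` and whose
null space is the range of `A ^ ind A`. -/
def IsEigenprojection {m : Type*} [Fintype m] [DecidableEq m]
    (A Q : Matrix m m ℝ) : Prop :=
  Q * Q = Q ∧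
  LinearMap.range Q.mulVecLin = LinearMap.ker (A ^ matIndex A).mulVecLin ∧
  LinearMap.ker Q.mulVecLin = LinearMap.range (A ^ matIndex A).mulVecLin

/-- A Laplacian matrix: nonpositive off-diagonal entries and zero row sums. -/
def IsLaplacian {m : Type*} [Fintype m] (L : Matrix m m ℝ) : Prop :=
  (∀ i j, i ≠ j → L i j ≤ 0) ∧ ∀ i, ∑ j, L i j = 0

/-- The block matrix `L₀ = [[L, 0], [0ᵀ, 0]]`. -/
def hubL0 {n : ℕ} (L : Matrix (Fin n) (Fin n) ℝ) :
    Matrix (Fin n ⊕ Unit) (Fin n ⊕ Unit) ℝ :=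
  Matrix.fromBlocks L 0 0 0

/-- The block matrix `H_I = [[I, -1], [0ᵀ, 0]]`. -/
def hubHI (n : ℕ) : Matrix (Fin n ⊕ Unit) (Fin n ⊕ Unit) ℝ :=
  Matrix.fromBlocks 1 (Matrix.of fun _ _ => (-1 : ℝ)) 0 0

/-- The block matrix `H_v = [[0, 0], [-vᵀ, s]]` where `s = Σᵢ vᵢ`. -/
def hubHv {n : ℕ} (v : Fin n → ℝ) : Matrix (Fin n ⊕ Unit) (Fin n ⊕ Unit) ℝ :=
  Matrix.fromBlocks 0 0 (Matrix.of fun _ j => -v j) (Matrix.of fun _ _ => ∑ i, v i)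

/-- `H_{δ,v} = δ·H_I + H_v`. -/
def hubH {n : ℕ} (δ : ℝ) (v : Fin n → ℝ) :
    Matrix (Fin n ⊕ Unit) (Fin n ⊕ Unit) ℝ :=
  δ • hubHI n + hubHv v

/-- The matrix `1′·(1/(n+1))·[1ᵀ(I + δ⁻¹L)⁻¹  1]`. -/
noncomputable def symmHubProj {n : ℕ} (L : Matrix (Fin n) (Fin n) ℝ) (δ : ℝ) :
    Matrix (Fin n ⊕ Unit) (Fin n ⊕ Unit) ℝ :=
  Matrix.vecMulVec (fun _ => (1 : ℝ))
    (Sum.elim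
      (fun j => ((n : ℝ) + 1)⁻¹ * ((fun _ => (1 : ℝ)) ᵥ* (1 + δ⁻¹ • L)⁻¹) j)
      (fun _ => ((n : ℝ) + 1)⁻¹))

/-!
A Laplacian has index at most one: by a maximum principle, `L y = 0` and `L x = y` force `y = 0`.
An idempotent `Q` with `A Q = Q A = 0` and `ker A ⊆ range Q` forces `ker A² = ker A` (so `A` has
index at most one), and `Q` is then the eigenprojection of `A`.

For `δ > 0` we have `L₀ + H_{δ,δ1} = δ • [[A, -1], [-1ᵀ, n]]` with `A = I + δ⁻¹L`, where `A 1 = 1`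
and `A` is invertible (maximum principle again). Its kernel is spanned by `1′`, and
`w = [1ᵀA⁻¹  1] / (n+1)` is a left null vector with `w 1′ = 1`, so `1′ w` is the eigenprojection.
For the limit, `L + J` is invertible and `(I + δ⁻¹L)⁻¹ = δ (L + J + δI)⁻¹ + (1 + δ)⁻¹ J`,
which tends to `J` as `δ → 0`.
-/

open LinearMap (ker range)

namespace IsLaplacian

variable {m : Type*} [Fintype m] {L : Matrix m m ℝ}

theorem mulVec_one (hL : IsLaplacian L) : L *ᵥ 1 = 0 := by
  ext i
  simpa [mulVec, dotProduct] using hL.2 i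

theorem mulVec_apply_eq_sum_mul_sub (hL : IsLaplacian L) (x : m → ℝ) (a : m) :
    (L *ᵥ x) a = ∑ j, L a j * (x j - x a) := by
  simp only [mul_sub, Finset.sum_sub_distrib, ← Finset.sum_mul, hL.2 a, zero_mul, sub_zero]
  rfl

theorem mul_sub_nonneg_of_isMax (hL : IsLaplacian L) {x : m → ℝ} {a : m}
    (ha : ∀ j, x j ≤ x a) (j : m) : 0 ≤ L a j * (x j - x a) := by
  rcases eq_or_ne a j with rfl | haj
  · simp
  · exact mul_nonneg_of_nonpos_of_nonpos (hL.1 a j haj) (sub_nonpos.2 (ha j))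

theorem apply_eq_zero_of_isMax_of_lt (hL : IsLaplacian L) {y : m → ℝ} (hy : L *ᵥ y = 0)
    {a b : m} (ha : ∀ j, y j ≤ y a) (hb : y b < y a) : L a b = 0 := by
  have hsum : ∑ j, L a j * (y j - y a) = 0 := by
    rw [← hL.mulVec_apply_eq_sum_mul_sub, hy, Pi.zero_apply]
  have hb' := (Finset.sum_eq_zero_iff_of_nonneg fun j _ => hL.mul_sub_nonneg_of_isMax ha j).1
    hsum b (Finset.mem_univ b)
  exact (mul_eq_zero.1 hb').resolve_right (sub_ne_zero.2 hb.ne)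

/-- Maximum principle. Take `a` maximizing `y` and, among the maximizers, minimizing `x`.
Every `j` with `L a j ≠ 0` again maximizes `y`, so `x j ≥ x a`, and hence
`y a = (L x) a = ∑ j, L a j * (x j - x a) ≤ 0`. -/
theorem apply_nonpos_of_mulVec_eq (hL : IsLaplacian L) {x y : m → ℝ} (hy : L *ᵥ y = 0)
    (hx : L *ᵥ x = y) (i : m) : y i ≤ 0 := by
  classical
  obtain ⟨c, -, hc⟩ := Finset.univ.exists_max_image y ⟨i, Finset.mem_univ i⟩
  obtain ⟨a, ha, hmin⟩ :=
    (Finset.univ.filter fun k => y k = y c).exists_min_image x ⟨c, by simp⟩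
  have hya : y a = y c := (Finset.mem_filter.1 ha).2
  have hmax : ∀ j, y j ≤ y a := fun j => hya ▸ hc j (Finset.mem_univ j)
  have hterm : ∀ j, L a j * (x j - x a) ≤ 0 := by
    intro j
    rcases eq_or_ne a j with rfl | haj
    · simp
    rcases (hmax j).lt_or_eq with hj | hj
    · simp [hL.apply_eq_zero_of_isMax_of_lt hy hmax hj]
    · exact mul_nonpos_of_nonpos_of_nonneg (hL.1 a j haj)
        (sub_nonneg.2 (hmin j (by simp [hj, hya])))
  calc y i ≤ y a := hmax i
    _ = ∑ j, L a j * (x j - x a) := by rw [← hx, hL.mulVec_apply_eq_sum_mul_sub]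
    _ ≤ 0 := Finset.sum_nonpos fun j _ => hterm j

theorem mulVec_eq_zero_of_mulVec_mulVec (hL : IsLaplacian L) {x : m → ℝ}
    (hx : L *ᵥ (L *ᵥ x) = 0) : L *ᵥ x = 0 := by
  funext i
  refine le_antisymm (hL.apply_nonpos_of_mulVec_eq hx rfl i) ?_
  have hneg := hL.apply_nonpos_of_mulVec_eq (x := -x) (y := -(L *ᵥ x))
    (by rw [mulVec_neg, hx, neg_zero]) (mulVec_neg x L) i
  simpa using hneg

theorem ker_mul_self (hL : IsLaplacian L) :
    ker (L * L).mulVecLin = ker L.mulVecLin := by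
  ext x
  simp only [LinearMap.mem_ker, mulVecLin_apply, ← mulVec_mulVec]
  exact ⟨hL.mulVec_eq_zero_of_mulVec_mulVec, fun h => by rw [h, mulVec_zero]⟩

theorem apply_nonpos_of_add_smul_mulVec_eq_zero (hL : IsLaplacian L) {c : ℝ} (hc : 0 ≤ c)
    {x : m → ℝ} (hx : x + c • L *ᵥ x = 0) (i : m) : x i ≤ 0 := by
  obtain ⟨a, -, ha⟩ := Finset.univ.exists_max_image x ⟨i, Finset.mem_univ i⟩
  have hLa : 0 ≤ (L *ᵥ x) a := by
    rw [hL.mulVec_apply_eq_sum_mul_sub]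
    exact Finset.sum_nonneg fun j _ => hL.mul_sub_nonneg_of_isMax (fun j => ha j (by simp)) j
  have hxa : x a + c * (L *ᵥ x) a = 0 := by simpa using congrFun hx a
  nlinarith [ha i (Finset.mem_univ i), mul_nonneg hc hLa]

theorem isUnit_one_add_smul [DecidableEq m] (hL : IsLaplacian L) {c : ℝ} (hc : 0 ≤ c) :
    IsUnit (1 + c • L) := by
  rw [← mulVec_injective_iff_isUnit, ← coe_mulVecLin, ← LinearMap.ker_eq_bot,
    ker_mulVecLin_eq_bot_iff]
  intro x hx
  rw [add_mulVec, one_mulVec, smul_mulVec] at hx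
  funext i
  refine le_antisymm (hL.apply_nonpos_of_add_smul_mulVec_eq_zero hc hx i) ?_
  have hneg := hL.apply_nonpos_of_add_smul_mulVec_eq_zero hc (x := -x)
    (by rw [mulVec_neg, smul_neg, ← neg_add, hx, neg_zero]) i
  simpa using hneg

theorem one_add_smul_mulVec_one [DecidableEq m] (hL : IsLaplacian L) (c : ℝ) :
    (1 + c • L) *ᵥ 1 = 1 := by
  rw [add_mulVec, one_mulVec, smul_mulVec, hL.mulVec_one, smul_zero, add_zero]

end IsLaplacian

section IndexLeOne

variable {m : Type*} [Fintype m]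

theorem Matrix.mul_eq_zero_iff_range_le_ker {R : Type*} [CommRing R] {A B : Matrix m m R} :
    A * B = 0 ↔ range B.mulVecLin ≤ ker A.mulVecLin := by
  rw [LinearMap.range_le_ker_iff, ← mulVecLin_mul, ext_iff_mulVec, LinearMap.ext_iff]
  simp

theorem Matrix.mulVec_eq_self_of_mem_range {R : Type*} [CommRing R] {Q : Matrix m m R}
    (hQ : Q * Q = Q) {y : m → R} (hy : y ∈ range Q.mulVecLin) : Q *ᵥ y = y := by
  obtain ⟨z, rfl⟩ := hy
  simp only [mulVecLin_apply, mulVec_mulVec, hQ]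

theorem Matrix.rank_eq_of_ker_eq {K : Type*} [Field K] {A B : Matrix m m K}
    (h : ker A.mulVecLin = ker B.mulVecLin) : A.rank = B.rank := by
  have hA := A.mulVecLin.finrank_range_add_finrank_ker
  have hB := B.mulVecLin.finrank_range_add_finrank_ker
  rw [h] at hA
  unfold rank
  omega

variable [DecidableEq m]

/-- The index is then `0` (and `A` is invertible) or `1`. -/
theorem ker_range_pow_matIndex {A : Matrix m m ℝ}
    (h : ker (A * A).mulVecLin = ker A.mulVecLin) :
    ker (A ^ matIndex A).mulVecLin = ker A.mulVecLin ∧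
      range (A ^ matIndex A).mulVecLin = range A.mulVecLin := by
  have h1 : 1 ∈ {k : ℕ | (A ^ (k + 1)).rank = (A ^ k).rank} := by
    simpa [sq] using rank_eq_of_ker_eq h
  have hle : matIndex A ≤ 1 := Nat.sInf_le h1
  rcases Nat.le_one_iff_eq_zero_or_eq_one.1 hle with h0 | h1'
  · have hfull : A.rank = Fintype.card m := by
      have hmem : matIndex A ∈ {k : ℕ | (A ^ (k + 1)).rank = (A ^ k).rank} :=
        Nat.sInf_mem ⟨1, h1⟩
      rw [h0] at hmem
      simpa [rank_one] using hmem
    have hrange : range A.mulVecLin = ⊤ :=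
      Submodule.eq_top_of_finrank_eq (by simpa [rank] using hfull)
    have hker : ker A.mulVecLin = ⊥ := LinearMap.ker_eq_bot.2
      (LinearMap.injective_iff_surjective.2 (LinearMap.range_eq_top.1 hrange))
    rw [h0, pow_zero, mulVecLin_one, LinearMap.ker_id, LinearMap.range_id, hker, hrange]
    exact ⟨rfl, rfl⟩
  · rw [h1', pow_one]
    exact ⟨rfl, rfl⟩

theorem isEigenprojection_iff_of_ker_mul_self {A Q : Matrix m m ℝ}
    (h : ker (A * A).mulVecLin = ker A.mulVecLin) :
    IsEigenprojection A Q ↔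
      Q * Q = Q ∧ range Q.mulVecLin = ker A.mulVecLin ∧ ker Q.mulVecLin = range A.mulVecLin := by
  obtain ⟨hker, hrange⟩ := ker_range_pow_matIndex h
  rw [IsEigenprojection, hker, hrange]

theorem isEigenprojection_of_mul_eq_zero {A Q : Matrix m m ℝ} (hQ : Q * Q = Q)
    (hAQ : A * Q = 0) (hQA : Q * A = 0) (hker : ker A.mulVecLin ≤ range Q.mulVecLin) :
    IsEigenprojection A Q := by
  have hrange : range Q.mulVecLin = ker A.mulVecLin :=
    le_antisymm (mul_eq_zero_iff_range_le_ker.1 hAQ) hker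
  have hsq : ker (A * A).mulVecLin = ker A.mulVecLin := by
    refine le_antisymm (fun x hx => ?_) fun x hx => ?_
    · -- `A x ∈ ker A = range Q`, so `A x = Q (A x) = 0`
      have hAx : A *ᵥ x ∈ range Q.mulVecLin := by
        rw [hrange]
        simpa [mulVec_mulVec] using hx
      rw [LinearMap.mem_ker, mulVecLin_apply, ← mulVec_eq_self_of_mem_range hQ hAx,
        mulVec_mulVec, hQA, zero_mulVec]
    · simp only [LinearMap.mem_ker, mulVecLin_apply, ← mulVec_mulVec] at hx ⊢
      rw [hx, mulVec_zero]
  refine (isEigenprojection_iff_of_ker_mul_self hsq).2 ⟨hQ, hrange, ?_⟩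
  refine (Submodule.eq_of_le_of_finrank_le (mul_eq_zero_iff_range_le_ker.1 hQA) ?_).symm
  have hQdim := Q.mulVecLin.finrank_range_add_finrank_ker
  have hAdim := A.mulVecLin.finrank_range_add_finrank_ker
  rw [hrange] at hQdim
  omega

theorem isEigenprojection_vecMulVec {A : Matrix m m ℝ} {c w : m → ℝ} (hwc : w ⬝ᵥ c = 1)
    (hAc : A *ᵥ c = 0) (hwA : w ᵥ* A = 0) (hker : ker A.mulVecLin ≤ Submodule.span ℝ {c}) :
    IsEigenprojection A (vecMulVec c w) := by
  refine isEigenprojection_of_mul_eq_zero ?_ ?_ ?_ (hker.trans ?_)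
  · rw [vecMulVec_mul_vecMulVec, hwc, one_smul]
  · rw [mul_vecMulVec, hAc, zero_vecMulVec]
  · rw [vecMulVec_mul, hwA, vecMulVec_zero]
  · rw [Submodule.span_singleton_le_iff_mem]
    exact ⟨c, by simp [vecMulVec_mulVec, hwc]⟩

end IndexLeOne

section Resolvent

variable {m : Type*} [Fintype m] [DecidableEq m] {L J : Matrix m m ℝ}

theorem isUnit_add_of_range_eq_ker (hJ : J * J = J) (hr : range J.mulVecLin = ker L.mulVecLin)
    (hJL : J * L = 0) : IsUnit (L + J) := by
  rw [← mulVec_injective_iff_isUnit, ← coe_mulVecLin, ← LinearMap.ker_eq_bot,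
    ker_mulVecLin_eq_bot_iff]
  intro x hx
  have hJx : J *ᵥ x = 0 := by
    simpa [mulVec_mulVec, mul_add, hJL, hJ] using congrArg (J *ᵥ ·) hx
  have hLx : x ∈ range J.mulVecLin := by
    rw [hr, LinearMap.mem_ker, mulVecLin_apply]
    simpa [add_mulVec, hJx] using hx
  rw [← mulVec_eq_self_of_mem_range hJ hLx, hJx]

theorem inv_one_add_inv_smul_eq (hJ : J * J = J) (hLJ : L * J = 0) (hJL : J * L = 0) {δ : ℝ}
    (hδ : δ ≠ 0) (hδ1 : 1 + δ ≠ 0) (hB : IsUnit (L + J + δ • 1)) :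
    (1 + δ⁻¹ • L)⁻¹ = δ • (L + J + δ • 1)⁻¹ + (1 + δ)⁻¹ • J := by
  set B := L + J + δ • 1 with hBdef
  have hBdet := (isUnit_iff_isUnit_det B).1 hB
  have hJB : J * B⁻¹ = (1 + δ)⁻¹ • J := by
    have hJB' : J * B = (1 + δ) • J := by
      rw [hBdef, mul_add, mul_add, hJL, hJ, Matrix.mul_smul, mul_one, zero_add, add_smul, one_smul]
    calc J * B⁻¹ = ((1 + δ)⁻¹ • (J * B)) * B⁻¹ := by
          rw [hJB', smul_smul, inv_mul_cancel₀ hδ1, one_smul]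
      _ = (1 + δ)⁻¹ • J := by rw [Matrix.smul_mul, mul_assoc, mul_nonsing_inv _ hBdet, mul_one]
  have hsplit : δ • (1 + δ⁻¹ • L) = B - J := by
    rw [smul_add, smul_smul, mul_inv_cancel₀ hδ, one_smul, hBdef]
    abel
  apply inv_eq_right_inv
  rw [mul_add, Matrix.mul_smul, ← Matrix.smul_mul, hsplit, sub_mul, mul_nonsing_inv _ hBdet, hJB,
    Matrix.mul_smul, add_mul, one_mul, Matrix.smul_mul, hLJ, smul_zero, add_zero, sub_add_cancel]

theorem tendsto_inv_one_add_inv_smul (hJ : J * J = J) (hLJ : L * J = 0) (hJL : J * L = 0)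
    (hB : IsUnit (L + J)) :
    Tendsto (fun δ : ℝ => (1 + δ⁻¹ • L)⁻¹) (𝓝[≠] 0) (𝓝 J) := by
  have hBcont : Continuous fun δ : ℝ => L + J + δ • (1 : Matrix m m ℝ) := by fun_prop
  have hinv : ContinuousAt (fun δ : ℝ => (L + J + δ • (1 : Matrix m m ℝ))⁻¹) 0 := by
    refine ContinuousAt.comp (g := Inv.inv) ?_ hBcont.continuousAt
    refine continuousAt_matrix_inv _ ?_
    simpa using NormedRing.inverse_continuousAt ((isUnit_iff_isUnit_det _).1 hB).unit
  have hlim : Tendsto (fun δ : ℝ => δ • (L + J + δ • 1)⁻¹ + (1 + δ)⁻¹ • J) (𝓝 0) (𝓝 J) := by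
    have hscalar : ContinuousAt (fun δ : ℝ => (1 + δ)⁻¹) 0 :=
      (continuousAt_const.add continuousAt_id).inv₀ (by norm_num)
    have hcont : ContinuousAt (fun δ : ℝ => δ • (L + J + δ • 1)⁻¹ + (1 + δ)⁻¹ • J) 0 :=
      (continuousAt_id.smul hinv).add (hscalar.smul continuousAt_const)
    simpa using hcont.tendsto
  have hBnear : ∀ᶠ δ in 𝓝 (0 : ℝ), IsUnit (L + J + δ • 1) := by
    have hdet : ContinuousAt (fun δ : ℝ => (L + J + δ • (1 : Matrix m m ℝ)).det) 0 :=
      hBcont.matrix_det.continuousAt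
    filter_upwards [hdet.eventually_ne (by simpa using ((isUnit_iff_isUnit_det _).1 hB).ne_zero)]
      with δ hδ
    exact (isUnit_iff_isUnit_det _).2 (Ne.isUnit hδ)
  have hδ1 : ∀ᶠ δ in 𝓝 (0 : ℝ), 1 + δ ≠ 0 :=
    (continuousAt_const.add continuousAt_id).eventually_ne (by norm_num)
  refine (hlim.mono_left nhdsWithin_le_nhds).congr' ?_
  filter_upwards [self_mem_nhdsWithin, nhdsWithin_le_nhds hBnear, nhdsWithin_le_nhds hδ1]
    with δ hδ hδB hδ1
  exact (inv_one_add_inv_smul_eq hJ hLJ hJL hδ hδ1 hδB).symm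

end Resolvent

section Hub

variable {n : ℕ}

/-- `symmHubProj L δ = vecMulVec 1 (hubRow (1 + δ⁻¹ • L)⁻¹)`, and the limit in the theorem is
`vecMulVec 1 (hubRow J)`. -/
noncomputable def hubRow (X : Matrix (Fin n) (Fin n) ℝ) : Fin n ⊕ Unit → ℝ :=
  Sum.elim (fun j => ((n : ℝ) + 1)⁻¹ * ((fun _ => (1 : ℝ)) ᵥ* X) j) (fun _ => ((n : ℝ) + 1)⁻¹)

def hubBlock (A : Matrix (Fin n) (Fin n) ℝ) : Matrix (Fin n ⊕ Unit) (Fin n ⊕ Unit) ℝ :=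
  fromBlocks A (of fun _ _ => -1) (of fun _ _ => -1) (of fun _ _ => (n : ℝ))

theorem hubL0_add_hubH_eq_smul_hubBlock (L : Matrix (Fin n) (Fin n) ℝ) {δ : ℝ} (hδ : δ ≠ 0) :
    hubL0 L + hubH δ (fun _ => δ) = δ • hubBlock (1 + δ⁻¹ • L) := by
  simp only [hubL0, hubH, hubHI, hubHv, hubBlock, fromBlocks_smul, fromBlocks_add]
  congr 1 <;> ext
  · simp
    field_simp
    ring
  all_goals simp [mul_comm]

theorem continuous_hubRow : Continuous (hubRow (n := n)) := by
  refine continuous_pi fun p => ?_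
  cases p with
  | inl j =>
    exact continuous_const.mul
      ((continuous_apply j).comp (continuous_const.matrix_vecMul continuous_id))
  | inr _ => exact continuous_const

variable {A : Matrix (Fin n) (Fin n) ℝ}

theorem hubBlock_mulVec_one (hA1 : A *ᵥ 1 = 1) : hubBlock A *ᵥ 1 = 0 := by
  have hrow (i : Fin n) : ∑ j, A i j = 1 := by simpa [mulVec, dotProduct] using congrFun hA1 i
  ext (_ | _) <;> simp [hubBlock, mulVec, dotProduct, hrow]

theorem inv_mulVec_one_of_mulVec_one (hA : IsUnit A) (hA1 : A *ᵥ 1 = 1) : A⁻¹ *ᵥ 1 = 1 := by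
  conv_lhs => rw [← hA1]
  rw [mulVec_mulVec, nonsing_inv_mul _ ((isUnit_iff_isUnit_det A).1 hA), one_mulVec]

theorem sum_sum_inv_apply_of_mulVec_one (hA : IsUnit A) (hA1 : A *ᵥ 1 = 1) :
    ∑ j, ∑ i, A⁻¹ i j = n := by
  have hrow (i : Fin n) : ∑ j, A⁻¹ i j = 1 := by
    simpa [mulVec, dotProduct] using congrFun (inv_mulVec_one_of_mulVec_one hA hA1) i
  simp [Finset.sum_comm (f := fun j i => A⁻¹ i j), hrow]

theorem hubRow_inv_dotProduct_one (hA : IsUnit A) (hA1 : A *ᵥ 1 = 1) :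
    hubRow A⁻¹ ⬝ᵥ 1 = 1 := by
  simp only [hubRow, dotProduct, vecMul, Fintype.sum_sum_type, Sum.elim_inl, Sum.elim_inr,
    Pi.one_apply, mul_one, one_mul, ← Finset.mul_sum, sum_sum_inv_apply_of_mulVec_one hA hA1,
    Finset.univ_unique, Finset.sum_singleton]
  field_simp

theorem hubRow_inv_vecMul_hubBlock (hA : IsUnit A) (hA1 : A *ᵥ 1 = 1) :
    hubRow A⁻¹ ᵥ* hubBlock A = 0 := by
  have hu : ((fun _ => (1 : ℝ)) ᵥ* A⁻¹) ᵥ* A = fun _ => 1 := by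
    rw [vecMul_vecMul, nonsing_inv_mul _ ((isUnit_iff_isUnit_det A).1 hA), vecMul_one]
  ext (j | _)
  · have huj := congrFun hu j
    simp only [vecMul, dotProduct, one_mul] at huj
    simp [hubRow, hubBlock, vecMul, dotProduct, mul_assoc, ← Finset.mul_sum, huj]
  · simp [hubRow, hubBlock, vecMul, dotProduct, ← Finset.mul_sum,
      sum_sum_inv_apply_of_mulVec_one hA hA1]

theorem ker_hubBlock_le (hA : IsUnit A) (hA1 : A *ᵥ 1 = 1) :
    ker (hubBlock A).mulVecLin ≤ Submodule.span ℝ {1} := by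
  intro x hx
  have htop : A *ᵥ (x ∘ Sum.inl) = A *ᵥ (x (Sum.inr ()) • 1) := by
    rw [mulVec_smul, hA1]
    ext i
    have h := congrFun hx (Sum.inl i)
    simp [hubBlock, mulVec, dotProduct] at h ⊢
    linarith
  rw [Submodule.mem_span_singleton]
  refine ⟨x (Sum.inr ()), ?_⟩
  have hinl := mulVec_injective_iff_isUnit.2 hA htop
  ext (i | _)
  · simpa using (congrFun hinl i).symm
  · simp

theorem isEigenprojection_smul_hubBlock (hA : IsUnit A) (hA1 : A *ᵥ 1 = 1) {δ : ℝ}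
    (hδ : δ ≠ 0) : IsEigenprojection (δ • hubBlock A) (vecMulVec 1 (hubRow A⁻¹)) := by
  refine isEigenprojection_vecMulVec (hubRow_inv_dotProduct_one hA hA1) ?_ ?_ ?_
  · rw [smul_mulVec, hubBlock_mulVec_one hA1, smul_zero]
  · rw [vecMul_smul, hubRow_inv_vecMul_hubBlock hA hA1, smul_zero]
  · intro x hx
    refine ker_hubBlock_le hA hA1 ?_
    simpa [smul_mulVec, hδ] using hx

end Hub

/-- For a Laplacian `L` with eigenprojection `J`, and a symmetric hub `v = δ·1`:
the eigenprojection of `L₀ + H_{δ,δ1}` equals `1′·(1/(n+1))·[1ᵀ(I + δ⁻¹L)⁻¹  1]`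
for each `δ > 0`, and this matrix converges to `1′·(1/(n+1))·[1ᵀJ  1]`
as `δ → 0⁺`. -/
theorem eigenprojection_symmetric_hub {n : ℕ} (L J : Matrix (Fin n) (Fin n) ℝ)
    (hL : IsLaplacian L) (hJ : IsEigenprojection L J) :
    (∀ δ : ℝ, 0 < δ →
      IsEigenprojection (hubL0 L + hubH δ (fun _ => δ)) (symmHubProj L δ)) ∧
    Tendsto (fun δ : ℝ => symmHubProj L δ) (𝓝[>] 0)
      (𝓝 (Matrix.vecMulVec (fun _ => (1 : ℝ))
        (Sum.elim
          (fun j => ((n : ℝ) + 1)⁻¹ * ((fun _ => (1 : ℝ)) ᵥ* J) j)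
          (fun _ => ((n : ℝ) + 1)⁻¹)))) := by
  refine ⟨fun δ hδ => ?_, ?_⟩
  · rw [hubL0_add_hubH_eq_smul_hubBlock L hδ.ne']
    exact isEigenprojection_smul_hubBlock (hL.isUnit_one_add_smul (inv_nonneg.2 hδ.le))
      (hL.one_add_smul_mulVec_one _) hδ.ne'
  · obtain ⟨hJJ, hrange, hker⟩ := (isEigenprojection_iff_of_ker_mul_self hL.ker_mul_self).1 hJ
    have hLJ : L * J = 0 := mul_eq_zero_iff_range_le_ker.2 hrange.le
    have hJL : J * L = 0 := mul_eq_zero_iff_range_le_ker.2 hker.ge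
    have hlim :=
      tendsto_inv_one_add_inv_smul hJJ hLJ hJL (isUnit_add_of_range_eq_ker hJJ hrange hJL)
    have hcont : Continuous fun X : Matrix (Fin n) (Fin n) ℝ =>
        vecMulVec (fun _ : Fin n ⊕ Unit => (1 : ℝ)) (hubRow X) :=
      continuous_const.matrix_vecMulVec continuous_hubRow
    exact (hcont.tendsto J).comp (hlim.mono_left (nhdsGT_le_nhdsNE 0))
end

section
/- Let L be an n×n Laplacian matrix with eigenprojection J̄ = L^⊢, and let y⁰ ∈ ℝ^{n+1}. For each δ > 0 let v(δ) ∈ ℝⁿ have nonnegative entries with s(δ) = Σᵢ v(δ)ᵢ > 0, and suppose δ/s(δ) → 0 and v(δ)/s(δ) → ṽ as δ → 0⁺. Then the double limit lim_{δ→0⁺} lim_{t→∞} exp(−t(L₀ + H_{δ,v(δ)}))·y⁰ equals the constant vector c·1′ with c = Σ_{j=1}^n (ṽᵀJ̄)_j · y⁰_j; in particular the initial state y⁰_{n+1} of the hub has no influence on the consensus. -/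
open Matrix Filter Topology

/-!
Since `L` is a Laplacian, `1 - ε • L` is row stochastic for small `ε > 0`, hence power bounded;
so `L` has no Jordan chain of length two at `0`, i.e. `ind L ≤ 1`. Then `J̄` is the projection
onto `ker L` along `range L`, `L + J̄` is invertible, and the Abel limit
`δ (L + δ I)⁻¹ → J̄` holds as `δ → 0`.

For fixed `δ`, the row vector `(vᵀ (L + δ I)⁻¹, δ)` is a left null vector of
`M = L₀ + H_{δ,v}`, so its pairing with `exp (-t M) y⁰` does not depend on `t`. Comparing
`t = 0` with `t → ∞` gives `c(δ) (s + δ) = vᵀ (L + δ I)⁻¹ y⁰ + δ y⁰ₙ₊₁`; dividing by `s` and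
writing the right side through `v / s` and `δ (L + δ I)⁻¹`, the limit `δ → 0⁺` is read off.
-/

namespace Matrix

variable {m : Type*} [Fintype m]

theorem sum_vecMul_eq_sum {R : Matrix m m ℝ} (hR : R *ᵥ 1 = 1)
    (v : m → ℝ) : ∑ j, (v ᵥ* R) j = ∑ i, v i := by
  rw [← dotProduct_one, ← dotProduct_mulVec, hR, dotProduct_one]

variable [DecidableEq m]

theorem norm_mulVec_le_of_mem_rowStochastic {P : Matrix m m ℝ} (hP : P ∈ rowStochastic ℝ m)
    (x : m → ℝ) : ‖P *ᵥ x‖ ≤ ‖x‖ := by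
  refine (pi_norm_le_iff_of_nonneg (norm_nonneg x)).2 fun i => ?_
  calc ‖(P *ᵥ x) i‖ = |∑ j, P i j * x j| := rfl
    _ ≤ ∑ j, P i j * ‖x‖ := by
        refine (Finset.abs_sum_le_sum_abs _ _).trans (Finset.sum_le_sum fun j _ => ?_)
        rw [abs_mul, abs_of_nonneg (nonneg_of_mem_rowStochastic hP)]
        exact mul_le_mul_of_nonneg_left (norm_le_pi_norm x j) (nonneg_of_mem_rowStochastic hP)
    _ = ‖x‖ := by rw [← Finset.sum_mul, sum_row_of_mem_rowStochastic hP i, one_mul]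

/-- `P ^ k *ᵥ x = x - k • (1 - P) *ᵥ x` stays bounded in `k` only if `(1 - P) *ᵥ x = 0`. -/
theorem one_sub_mulVec_eq_zero_of_mem_rowStochastic {P : Matrix m m ℝ} (hP : P ∈ rowStochastic ℝ m)
    {x : m → ℝ} (hx : (1 - P) *ᵥ ((1 - P) *ᵥ x) = 0) : (1 - P) *ᵥ x = 0 := by
  set y := (1 - P) *ᵥ x
  have hPy : P *ᵥ y = y := by
    rwa [sub_mulVec, one_mulVec, sub_eq_zero, eq_comm] at hx
  have hpow : ∀ k : ℕ, (P ^ k) *ᵥ x = x - (k : ℝ) • y := by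
    intro k
    induction k with
    | zero => simp
    | succ k ih =>
      have hPx : P *ᵥ x = x - y := by simp [y, sub_mulVec]
      rw [pow_succ', ← mulVec_mulVec, ih, mulVec_sub, mulVec_smul, hPx, hPy]
      push_cast
      module
  have hbound : ∀ k : ℕ, (k : ℝ) * ‖y‖ ≤ 2 * ‖x‖ := fun k =>
    calc (k : ℝ) * ‖y‖ = ‖x - (x - (k : ℝ) • y)‖ := by
          rw [sub_sub_cancel, norm_smul, Real.norm_natCast]
      _ ≤ ‖x‖ + ‖x - (k : ℝ) • y‖ := norm_sub_le _ _
      _ ≤ 2 * ‖x‖ := by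
          rw [← hpow k]
          linarith [norm_mulVec_le_of_mem_rowStochastic (pow_mem hP k) x]
  by_contra hy
  have hpos : 0 < ‖y‖ := norm_pos_iff.2 hy
  obtain ⟨k, hk⟩ := exists_nat_gt (2 * ‖x‖ / ‖y‖)
  rw [div_lt_iff₀ hpos] at hk
  linarith [hbound k]

theorem rank_sq_eq_of_ker_sq_eq {A : Matrix m m ℝ}
    (h : LinearMap.ker (A ^ 2).mulVecLin = LinearMap.ker A.mulVecLin) :
    (A ^ 2).rank = A.rank := by
  have h2 := LinearMap.finrank_range_add_finrank_ker (A ^ 2).mulVecLin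
  have h1 := LinearMap.finrank_range_add_finrank_ker A.mulVecLin
  rw [h] at h2
  exact Nat.add_right_cancel (h2.trans h1.symm)

theorem mul_eq_zero_iff_range_le_ker_s12 {A B : Matrix m m ℝ} :
    A * B = 0 ↔ LinearMap.range B.mulVecLin ≤ LinearMap.ker A.mulVecLin := by
  rw [LinearMap.range_le_ker_iff, ← mulVecLin_mul, ← toLin'_apply', LinearEquiv.map_eq_zero_iff]

variable {L J : Matrix m m ℝ}

theorem commute_nonsing_inv_right {A B : Matrix m m ℝ} (hB : IsUnit B.det) (h : Commute A B) :
    Commute A B⁻¹ :=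
  calc A * B⁻¹ = B⁻¹ * (B * A) * B⁻¹ := by rw [← Matrix.mul_assoc, nonsing_inv_mul _ hB, one_mul]
    _ = B⁻¹ * A := by rw [← h.eq, Matrix.mul_assoc, Matrix.mul_assoc, mul_nonsing_inv _ hB, mul_one]

/-- The resolvent `(L + δ • 1)⁻¹` acts as `δ⁻¹` on `range J` and as `(L + J + δ • 1)⁻¹` on
`ker J`; unlike `L + δ • 1`, the matrix `L + J + δ • 1` stays invertible at `δ = 0`. -/
theorem add_smul_one_mul_eq_smul_one (hLJ : L * J = 0) (hJL : J * L = 0) (hJJ : J * J = J)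
    {δ : ℝ} (hB : IsUnit (L + J + δ • 1).det) :
    (L + δ • 1) * (J + δ • ((L + J + δ • 1)⁻¹ * (1 - J))) = δ • 1 := by
  set B := L + J + δ • 1
  have hJB : Commute J B⁻¹ := commute_nonsing_inv_right hB <| by
    simp only [Commute, SemiconjBy, B, Matrix.mul_add, Matrix.add_mul, hLJ, hJL, hJJ,
      Matrix.mul_smul, Matrix.smul_mul, Matrix.mul_one, Matrix.one_mul]
  have hA : L + δ • 1 = B - J := by simp only [B]; abel
  rw [hA, Matrix.mul_add, Matrix.mul_smul, Matrix.sub_mul, Matrix.sub_mul, ← Matrix.mul_assoc,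
    mul_nonsing_inv _ hB, Matrix.one_mul, ← Matrix.mul_assoc, hJB.eq, Matrix.mul_assoc,
    Matrix.mul_sub, hJJ, Matrix.mul_one, sub_self, Matrix.mul_zero, sub_zero]
  simp only [B, Matrix.add_mul, hLJ, hJJ, Matrix.smul_mul, Matrix.one_mul]
  module

theorem eventually_isUnit_det_add_smul_one {M : Matrix m m ℝ} (hM : IsUnit M.det) :
    ∀ᶠ δ in 𝓝 (0 : ℝ), IsUnit (M + δ • 1).det := by
  have hcont : Continuous fun δ : ℝ => (M + δ • (1 : Matrix m m ℝ)).det :=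
    (continuous_const.add (continuous_id.smul continuous_const)).matrix_det
  filter_upwards [hcont.continuousAt.eventually_ne (by simpa using hM.ne_zero)] with δ hδ
  exact hδ.isUnit

theorem continuousAt_inv_add_smul_one {M : Matrix m m ℝ} (hM : IsUnit M.det) :
    ContinuousAt (fun δ : ℝ => (M + δ • 1)⁻¹) 0 := by
  refine ContinuousAt.comp (g := Inv.inv) ?_
    (continuous_const.add (continuous_id.smul continuous_const)).continuousAt
  refine continuousAt_matrix_inv _ ?_
  rw [zero_smul, add_zero, Ring.inverse_eq_inv']
  exact continuousAt_inv₀ hM.ne_zero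

theorem eventually_smul_inv_add_smul_one_eq (hLJ : L * J = 0) (hJL : J * L = 0)
    (hJJ : J * J = J) (hU : IsUnit (L + J)) :
    ∀ᶠ δ in 𝓝[≠] (0 : ℝ), IsUnit (L + δ • 1).det ∧
      δ • (L + δ • 1)⁻¹ = J + δ • ((L + J + δ • 1)⁻¹ * (1 - J)) := by
  filter_upwards [nhdsWithin_le_nhds (eventually_isUnit_det_add_smul_one
    ((isUnit_iff_isUnit_det _).1 hU)), self_mem_nhdsWithin] with δ hB (hδ : δ ≠ 0)
  have hinv : (L + δ • 1) * (δ⁻¹ • (J + δ • ((L + J + δ • 1)⁻¹ * (1 - J)))) = 1 := by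
    rw [Matrix.mul_smul, add_smul_one_mul_eq_smul_one hLJ hJL hJJ hB, smul_smul,
      inv_mul_cancel₀ hδ, one_smul]
  refine ⟨isUnit_det_of_right_inverse hinv, ?_⟩
  rw [inv_eq_right_inv hinv, smul_smul, mul_inv_cancel₀ hδ, one_smul]

theorem tendsto_smul_inv_add_smul_one (hLJ : L * J = 0) (hJL : J * L = 0) (hJJ : J * J = J)
    (hU : IsUnit (L + J)) :
    Tendsto (fun δ : ℝ => δ • (L + δ • 1)⁻¹) (𝓝[≠] 0) (𝓝 J) := by
  have hcont : ContinuousAt (fun δ : ℝ => J + δ • ((L + J + δ • 1)⁻¹ * (1 - J))) 0 :=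
    continuousAt_const.add <| continuousAt_id.smul <|
      (continuousAt_inv_add_smul_one ((isUnit_iff_isUnit_det _).1 hU)).mul continuousAt_const
  refine Tendsto.congr' ((eventually_smul_inv_add_smul_one_eq hLJ hJL hJJ hU).mono
    fun δ h => h.2.symm) ?_
  simpa using hcont.tendsto.mono_left nhdsWithin_le_nhds

theorem vecMul_exp_eq_self {X : Matrix m m ℝ} {w : m → ℝ} (h : w ᵥ* X = 0) :
    w ᵥ* NormedSpace.exp X = w := by
  let _ : NormedRing (Matrix m m ℝ) := Matrix.linftyOpNormedRing
  let _ : NormedAlgebra ℝ (Matrix m m ℝ) := Matrix.linftyOpNormedAlgebra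
  let f : Matrix m m ℝ →+ (m → ℝ) := AddMonoidHom.mk' (w ᵥ* ·) fun A B => vecMul_add A B w
  have hexp := (NormedSpace.exp_series_hasSum_exp' (𝕂 := ℝ) X).map f
    (continuous_const.matrix_vecMul continuous_id)
  refine hexp.unique ?_
  convert hasSum_single (f := f ∘ fun k => (k.factorial⁻¹ : ℝ) • X ^ k) 0 fun k hk => ?_ using 1
  · simp [f]
  · obtain ⟨k, rfl⟩ := Nat.exists_eq_succ_of_ne_zero hk
    simp [f, vecMul_smul, pow_succ', ← vecMul_vecMul, h]

theorem mul_sum_eq_dotProduct_of_tendsto_exp {M : Matrix m m ℝ} {w y₀ : m → ℝ} {c : ℝ}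
    (hw : w ᵥ* M = 0)
    (hc : Tendsto (fun t : ℝ => NormedSpace.exp (-(t • M)) *ᵥ y₀) atTop (𝓝 fun _ => c)) :
    c * ∑ i, w i = w ⬝ᵥ y₀ := by
  have hconst : ∀ t : ℝ, w ⬝ᵥ (NormedSpace.exp (-(t • M)) *ᵥ y₀) = w ⬝ᵥ y₀ := fun t => by
    rw [dotProduct_mulVec, vecMul_exp_eq_self (by simp [vecMul_neg, vecMul_smul, hw])]
  have hlim := ((continuous_const.dotProduct continuous_id :
    Continuous fun x : m → ℝ => w ⬝ᵥ x).tendsto _).comp hc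
  simp only [Function.comp_def, hconst] at hlim
  rw [tendsto_const_nhds_iff.1 hlim, dotProduct, Finset.mul_sum]
  simp [mul_comm]

theorem mulVec_one_eq_one_of_mul_add_smul_one {R : Matrix m m ℝ} {δ : ℝ}
    (hrow : ∀ i, ∑ j, L i j = 0) (hδ : δ ≠ 0) (hR : R * (L + δ • 1) = δ • 1) : R *ᵥ 1 = 1 := by
  have hA : (L + δ • 1) *ᵥ 1 = δ • (1 : m → ℝ) := by
    ext i
    simp [mulVec, dotProduct, Finset.sum_add_distrib, hrow, one_apply]
  have := congrArg (· *ᵥ (1 : m → ℝ)) hR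
  simp only [← mulVec_mulVec, hA, mulVec_smul, smul_mulVec, one_mulVec] at this
  exact smul_right_injective _ hδ this

end Matrix

namespace IsLaplacian

variable {m : Type*} [Fintype m] {L : Matrix m m ℝ}

theorem diag_nonneg (hL : IsLaplacian L) (i : m) : 0 ≤ L i i := by
  classical
  have hrow := hL.2 i
  rw [← Finset.add_sum_erase _ _ (Finset.mem_univ i)] at hrow
  linarith [Finset.sum_nonpos (s := Finset.univ.erase i) fun j hj =>
    hL.1 i j (Finset.ne_of_mem_erase hj).symm]

theorem exists_one_sub_smul_mem_rowStochastic [DecidableEq m] (hL : IsLaplacian L) :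
    ∃ ε : ℝ, 0 < ε ∧ 1 - ε • L ∈ Matrix.rowStochastic ℝ m := by
  set S := ∑ i, L i i
  have hS : 0 ≤ S := Finset.sum_nonneg fun i _ => hL.diag_nonneg i
  refine ⟨(1 + S)⁻¹, by positivity, Matrix.mem_rowStochastic_iff_sum.2 ⟨fun i j => ?_, fun i => ?_⟩⟩
  · rcases eq_or_ne i j with rfl | hij
    · have hii : L i i ≤ S := Finset.single_le_sum (fun k _ => hL.diag_nonneg k) (Finset.mem_univ i)
      have : (1 + S)⁻¹ * L i i ≤ 1 := by
        rw [inv_mul_le_iff₀ (by positivity)]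
        linarith
      simpa [smul_eq_mul] using this
    · simpa [Matrix.one_apply_ne hij] using
        mul_nonpos_of_nonneg_of_nonpos (by positivity : 0 ≤ (1 + S)⁻¹) (hL.1 i j hij)
  · simp [Finset.sum_sub_distrib, ← Finset.mul_sum, hL.2 i, Matrix.one_apply]

theorem ker_sq [DecidableEq m] (hL : IsLaplacian L) :
    LinearMap.ker (L ^ 2).mulVecLin = LinearMap.ker L.mulVecLin := by
  obtain ⟨ε, hε, hP⟩ := hL.exists_one_sub_smul_mem_rowStochastic
  refine le_antisymm (fun x hx => ?_) fun x hx => ?_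
  · replace hx : (L * L) *ᵥ x = 0 := by simpa [sq] using hx
    have key := Matrix.one_sub_mulVec_eq_zero_of_mem_rowStochastic hP (x := x) (by
      simp [Matrix.smul_mulVec, Matrix.mulVec_smul, Matrix.mulVec_mulVec, hx])
    rw [sub_sub_cancel, Matrix.smul_mulVec, smul_eq_zero] at key
    exact key.resolve_left hε.ne'
  · simp_all [sq]

end IsLaplacian

namespace IsEigenprojection

variable {m : Type*} [Fintype m] [DecidableEq m] {A Q : Matrix m m ℝ}

theorem range_eq_ker_and_ker_eq_range (hQ : IsEigenprojection A Q)
    (h : LinearMap.ker (A ^ 2).mulVecLin = LinearMap.ker A.mulVecLin) :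
    LinearMap.range Q.mulVecLin = LinearMap.ker A.mulVecLin ∧
      LinearMap.ker Q.mulVecLin = LinearMap.range A.mulVecLin := by
  have hstable : 1 ∈ {k : ℕ | (A ^ (k + 1)).rank = (A ^ k).rank} := by
    simpa using Matrix.rank_sq_eq_of_ker_sq_eq h
  obtain h0 | h1 : matIndex A = 0 ∨ matIndex A = 1 := by
    have := Nat.sInf_le hstable
    unfold matIndex
    omega
  · have hrank : A.rank = Fintype.card m := by
      have := Nat.sInf_mem ⟨1, hstable⟩
      rw [← matIndex, h0] at this
      simpa using this
    have hA : IsUnit A := Matrix.mulVec_surjective_iff_isUnit.1 <| LinearMap.range_eq_top.1 <|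
      Submodule.eq_top_of_finrank_eq (S := LinearMap.range A.mulVecLin)
        (by rw [Module.finrank_fintype_fun_eq_card]; exact hrank)
    obtain ⟨-, hr, hk⟩ := hQ
    rw [h0, pow_zero, Matrix.mulVecLin_one, LinearMap.ker_id] at hr
    rw [h0, pow_zero, Matrix.mulVecLin_one, LinearMap.range_id] at hk
    rw [hr, hk, LinearMap.ker_eq_bot.2 (Matrix.mulVec_injective_iff_isUnit.2 hA),
      LinearMap.range_eq_top.2 (Matrix.mulVec_surjective_iff_isUnit.2 hA)]
    exact ⟨rfl, rfl⟩
  · simpa [h1] using hQ.2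

theorem mul_eq_zero_and_isUnit_add (hQ : IsEigenprojection A Q)
    (h : LinearMap.ker (A ^ 2).mulVecLin = LinearMap.ker A.mulVecLin) :
    A * Q = 0 ∧ Q * A = 0 ∧ IsUnit (A + Q) := by
  obtain ⟨hr, hk⟩ := hQ.range_eq_ker_and_ker_eq_range h
  have hQA : Q * A = 0 := Matrix.mul_eq_zero_iff_range_le_ker_s12.2 hk.ge
  refine ⟨Matrix.mul_eq_zero_iff_range_le_ker_s12.2 hr.le, hQA, Matrix.mulVec_injective_iff_isUnit.1 ?_⟩
  refine (LinearMap.ker_eq_bot (f := (A + Q).mulVecLin)).1 (LinearMap.ker_eq_bot'.2 fun z hz => ?_)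
  replace hz : A *ᵥ z + Q *ᵥ z = 0 := by simpa [Matrix.add_mulVec] using hz
  have hQz : Q *ᵥ z = 0 := by
    simpa [Matrix.mulVec_add, Matrix.mulVec_mulVec, hQA, hQ.1] using congrArg (Q *ᵥ ·) hz
  obtain ⟨u, rfl⟩ : z ∈ LinearMap.range Q.mulVecLin := by
    rw [hr]
    simpa [hQz] using hz
  simpa [Matrix.mulVec_mulVec, hQ.1] using hQz

end IsEigenprojection

section Hub

variable {n : ℕ} {L R : Matrix (Fin n) (Fin n) ℝ} {δ : ℝ}

theorem hubL0_add_hubH (v : Fin n → ℝ) :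
    hubL0 L + hubH δ v =
      fromBlocks (L + δ • 1) (of fun _ _ => -δ) (of fun _ j => -v j) (of fun _ _ => ∑ i, v i) := by
  ext (i | i) (j | j) <;> simp [hubL0, hubHI, hubHv, hubH, fromBlocks]

theorem vecMul_hubL0_add_hubH_eq_zero (hrow : ∀ i, ∑ j, L i j = 0) (hδ : δ ≠ 0)
    (hR : R * (L + δ • 1) = δ • 1) (v : Fin n → ℝ) :
    Sum.elim (v ᵥ* R) (fun _ => δ) ᵥ* (hubL0 L + hubH δ v) = 0 := by
  have hsum := sum_vecMul_eq_sum (mulVec_one_eq_one_of_mul_add_smul_one hrow hδ hR) v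
  rw [hubL0_add_hubH, vecMul_fromBlocks]
  ext (j | j)
  · simp [vecMul_vecMul, hR, vecMul_smul, vecMul, dotProduct]
  · show ∑ j, (v ᵥ* R) j * -δ + ∑ _ : Unit, δ * ∑ i, v i = 0
    rw [← Finset.sum_mul, hsum, Finset.sum_const, Finset.card_univ, Fintype.card_unit]
    ring

theorem mul_sum_add_eq_of_tendsto_exp_hub (hrow : ∀ i, ∑ j, L i j = 0) (hδ : δ ≠ 0)
    (hR : R * (L + δ • 1) = δ • 1) {v : Fin n → ℝ} {y₀ : Fin n ⊕ Unit → ℝ} {c : ℝ}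
    (hc : Tendsto (fun t : ℝ => NormedSpace.exp (-(t • (hubL0 L + hubH δ v))) *ᵥ y₀) atTop
      (𝓝 fun _ => c)) :
    c * (∑ i, v i + δ) = (v ᵥ* R) ⬝ᵥ (y₀ ∘ Sum.inl) + δ * y₀ (Sum.inr ()) := by
  have := mul_sum_eq_dotProduct_of_tendsto_exp (vecMul_hubL0_add_hubH_eq_zero hrow hδ hR v) hc
  rw [Fintype.sum_sum_type, dotProduct, Fintype.sum_sum_type] at this
  simp only [Sum.elim_inl, Sum.elim_inr, Fintype.sum_unique,
    sum_vecMul_eq_sum (mulVec_one_eq_one_of_mul_add_smul_one hrow hδ hR)] at this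
  simpa [dotProduct] using this

theorem eq_div_of_tendsto_exp_hub (hrow : ∀ i, ∑ j, L i j = 0) (hδ : 0 < δ)
    (hA : IsUnit (L + δ • 1).det) {v : Fin n → ℝ} (hs : 0 < ∑ i, v i) {y₀ : Fin n ⊕ Unit → ℝ}
    {c : ℝ} (hc : Tendsto (fun t : ℝ => NormedSpace.exp (-(t • (hubL0 L + hubH δ v))) *ᵥ y₀)
      atTop (𝓝 fun _ => c)) :
    c = ((((∑ i, v i)⁻¹ • v) ᵥ* (δ • (L + δ • 1)⁻¹)) ⬝ᵥ (y₀ ∘ Sum.inl) +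
      (δ / ∑ i, v i) * y₀ (Sum.inr ())) / (1 + δ / ∑ i, v i) := by
  have key := mul_sum_add_eq_of_tendsto_exp_hub hrow hδ.ne' (R := δ • (L + δ • 1)⁻¹)
    (by rw [Matrix.smul_mul, nonsing_inv_mul _ hA]) hc
  rw [smul_vecMul, smul_dotProduct, smul_eq_mul, eq_div_iff (by positivity)]
  field_simp
  linarith

end Hub

theorem latent_consensus_subordinate_hub_general {n : ℕ}
    (L J : Matrix (Fin n) (Fin n) ℝ)
    (hL : IsLaplacian L) (hJ : IsEigenprojection L J)
    (v : ℝ → Fin n → ℝ)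
    (hs : ∀ δ : ℝ, 0 < δ → 0 < ∑ i, v δ i)
    (hds : Tendsto (fun δ : ℝ => δ / ∑ i, v δ i) (𝓝[>] 0) (𝓝 0))
    (vt : Fin n → ℝ)
    (hvt : Tendsto (fun δ : ℝ => (∑ i, v δ i)⁻¹ • v δ) (𝓝[>] 0) (𝓝 vt))
    (y0 : (Fin n ⊕ Unit) → ℝ) (c : ℝ → ℝ)
    (hc : ∀ δ : ℝ, 0 < δ →
      Tendsto
        (fun t : ℝ =>
          (NormedSpace.exp (-(t • (hubL0 L + hubH δ (v δ))))).mulVec y0)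
        atTop (𝓝 (fun _ => c δ))) :
    Tendsto c (𝓝[>] 0) (𝓝 (∑ j, (vt ᵥ* J) j * y0 (Sum.inl j))) := by
  obtain ⟨hLJ, hJL, hU⟩ := hJ.mul_eq_zero_and_isUnit_add hL.ker_sq
  have hres := (Matrix.tendsto_smul_inv_add_smul_one hLJ hJL hJ.1 hU).mono_left
    (nhdsGT_le_nhdsNE 0)
  have hagents := ((continuous_id.dotProduct continuous_const :
    Continuous fun x : Fin n → ℝ => x ⬝ᵥ (y0 ∘ Sum.inl)).tendsto _).comp <|
      ((continuous_fst.matrix_vecMul continuous_snd).tendsto _).comp (hvt.prodMk_nhds hres)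
  have hlim : Tendsto (fun δ : ℝ => ((((∑ i, v δ i)⁻¹ • v δ) ᵥ* (δ • (L + δ • 1)⁻¹)) ⬝ᵥ
      (y0 ∘ Sum.inl) + (δ / ∑ i, v δ i) * y0 (Sum.inr ())) / (1 + δ / ∑ i, v δ i)) (𝓝[>] 0)
      (𝓝 ((vt ᵥ* J) ⬝ᵥ (y0 ∘ Sum.inl))) := by
    simpa [Pi.div_def] using (hagents.add (hds.mul_const (y0 (Sum.inr ())))).div
      (tendsto_const_nhds.add hds) (by norm_num : (1 : ℝ) + 0 ≠ 0)
  refine hlim.congr' ?_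
  filter_upwards [(Matrix.eventually_smul_inv_add_smul_one_eq hLJ hJL hJ.1 hU).filter_mono
    (nhdsGT_le_nhdsNE 0), self_mem_nhdsWithin] with δ hA (hδ : 0 < δ)
  exact (eq_div_of_tendsto_exp_hub hL.2 hδ hA.1 (hs δ hδ) (hc δ hδ)).symm

/-- Consensus with a hub subordinate to the agents: if `δ/s(δ) → 0` and
`v(δ)/s(δ) → ṽ` as `δ → 0⁺`, and for each `δ > 0` the system reaches the
consensus `c(δ)·1′`, then `c(δ) → Σⱼ (ṽᵀJ̄)ⱼ y⁰ⱼ` as `δ → 0⁺`; in particular,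
the initial state of the hub has no influence on the latent consensus. -/
theorem latent_consensus_subordinate_hub {n : ℕ}
    (L J : Matrix (Fin n) (Fin n) ℝ)
    (hL : IsLaplacian L) (hJ : IsEigenprojection L J)
    (v : ℝ → Fin n → ℝ) (hv : ∀ δ : ℝ, 0 < δ → ∀ i, 0 ≤ v δ i)
    (hs : ∀ δ : ℝ, 0 < δ → 0 < ∑ i, v δ i)
    (hds : Tendsto (fun δ : ℝ => δ / ∑ i, v δ i) (𝓝[>] 0) (𝓝 0))
    (vt : Fin n → ℝ)
    (hvt : Tendsto (fun δ : ℝ => (∑ i, v δ i)⁻¹ • v δ) (𝓝[>] 0) (𝓝 vt))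
    (y0 : (Fin n ⊕ Unit) → ℝ) (c : ℝ → ℝ)
    (hc : ∀ δ : ℝ, 0 < δ →
      Tendsto
        (fun t : ℝ =>
          (NormedSpace.exp (-(t • (hubL0 L + hubH δ (v δ))))).mulVec y0)
        atTop (𝓝 (fun _ => c δ))) :
    Tendsto c (𝓝[>] 0) (𝓝 (∑ j, (vt ᵥ* J) j * y0 (Sum.inl j))) :=
  latent_consensus_subordinate_hub_general L J hL hJ v hs hds vt hvt y0 c hc
end
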